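/- In the enlarged model with q_t^G(ω) = P(G = G(ω)|F_t)(ω)/P(G = G(ω)) well-defined and positive for t ≤ T−1, suppose S̃ = (S̃_t) is a process that is a martingale on {0,...,T−1} under some measure P̂ equivalent to P on F_{T−1}, with density process L̂_t = (dP̂/dP)|F_t. Then the process (L̂_t / q_t^G)_{t=0..T−1} is a positive (P, G)-martingale M with the property that (S̃_t M_t)_{t=0..T−1} is a (P, G)-martingale, i.e. L̂/q^G is a deflator for S̃ on the horizon {0,...,T−1}. -/

import Mathlib

/-!
On the atom `{G = c}` we have `q^G_t = P(G = c | ℱ_t) / P(G = c)`. Hence for `A ∈ ℱ_t` and an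
`ℱ_t`-measurable `f`, pulling the `ℱ_t`-measurable factor `1_A f L̂_t / P(G = c | ℱ_t)` out and
replacing `1_{G = c}` by its conditional expectation gives
`∫_{A ∩ {G = c}} f L̂_t / q^G_t dP = P(G = c) ∫_A f L̂_t dP = P(G = c) ∫_A f dP̂`.
The sets `A ∩ {G = c}` with `A ∈ ℱ_s` form a π-system generating `𝒢_s`, so `f L̂ / q^G` is a
`(P, 𝒢)`-martingale whenever `f` is a `(P̂, ℱ)`-martingale; take `f = 1` and `f = S̃`.
-/

open MeasureTheory Set

section

variable {Ω Γ : Type*} {m mΩ : MeasurableSpace Ω}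

theorem MeasureTheory.StronglyMeasurable.integrable_of_finite [Finite Ω] {μ : Measure Ω}
    [IsFiniteMeasure μ] {f : Ω → ℝ} (hf : StronglyMeasurable f) : Integrable f μ := by
  obtain ⟨C, hC⟩ := (Set.finite_range fun ω => ‖f ω‖).bddAbove
  exact .of_bound hf.aestronglyMeasurable C (ae_of_all _ fun ω => hC ⟨ω, rfl⟩)

theorem measurable_sup_comap_apply {β : Type*} [MeasurableSpace β] [mΓ : MeasurableSpace Γ]
    [Countable Γ] [MeasurableSingletonClass Γ] {G : Ω → Γ} {F : Γ → Ω → β}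
    (hF : ∀ c, Measurable[m] (F c)) :
    Measurable[m ⊔ MeasurableSpace.comap G mΓ] fun ω => F (G ω) ω := by
  have hpair : Measurable[m ⊔ MeasurableSpace.comap G mΓ] fun ω => (ω, G ω) :=
    (measurable_id.mono le_sup_left le_rfl).prodMk
      ((comap_measurable G).mono le_sup_right le_rfl)
  exact (measurable_from_prod_countable_left (f := fun p : Ω × Γ => F p.2 p.1) hF).comp hpair

theorem setIntegral_eq_setIntegral_of_isPiSystem {E : Type*} [NormedAddCommGroup E]
    [NormedSpace ℝ E] (hm : m ≤ mΩ) {μ : Measure Ω} {f g : Ω → E} {K : Set (Set Ω)}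
    (h_eq : m = MeasurableSpace.generateFrom K) (h_inter : IsPiSystem K)
    (hf : Integrable f μ) (hg : Integrable g μ)
    (basic : ∀ t ∈ K, ∫ x in t, f x ∂μ = ∫ x in t, g x ∂μ)
    (h_univ : ∫ x, f x ∂μ = ∫ x, g x ∂μ) {t : Set Ω} (ht : MeasurableSet[m] t) :
    ∫ x in t, f x ∂μ = ∫ x in t, g x ∂μ := by
  induction t, ht using MeasurableSpace.induction_on_inter h_eq h_inter with
  | empty => simp
  | basic t ht => exact basic t ht
  | compl t ht ih =>
    rw [setIntegral_compl (hm t ht) hf, setIntegral_compl (hm t ht) hg, ih, h_univ]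
  | iUnion t hdisj ht ih =>
    rw [integral_iUnion (fun i => hm _ (ht i)) hdisj hf.integrableOn,
      integral_iUnion (fun i => hm _ (ht i)) hdisj hg.integrableOn]
    exact tsum_congr ih

theorem isPiSystem_inter_preimage_singleton {G : Ω → Γ} :
    IsPiSystem {S | ∃ A, MeasurableSet[m] A ∧ ∃ c, S = A ∩ G ⁻¹' {c}} := by
  rintro _ ⟨A, hA, c, rfl⟩ _ ⟨A', hA', c', rfl⟩ ⟨ω, ⟨-, hc⟩, -, hc'⟩
  obtain rfl : c = c' := hc.symm.trans hc'
  exact ⟨A ∩ A', hA.inter hA', c, by ext; simp only [mem_inter_iff]; tauto⟩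

theorem sup_comap_eq_generateFrom_inter_preimage_singleton [mΓ : MeasurableSpace Γ]
    [Countable Γ] [MeasurableSingletonClass Γ] {G : Ω → Γ} :
    m ⊔ MeasurableSpace.comap G mΓ =
      MeasurableSpace.generateFrom {S | ∃ A, MeasurableSet[m] A ∧ ∃ c, S = A ∩ G ⁻¹' {c}} := by
  refine le_antisymm (sup_le ?_ ?_) (MeasurableSpace.generateFrom_le ?_)
  · intro A hA
    have hA_eq : A = ⋃ c, A ∩ G ⁻¹' {c} := by ext; simp
    rw [hA_eq]
    exact .iUnion fun c => MeasurableSpace.measurableSet_generateFrom ⟨A, hA, c, rfl⟩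
  · rintro _ ⟨B, -, rfl⟩
    have hB_eq : G ⁻¹' B = ⋃ c ∈ B, univ ∩ G ⁻¹' {c} := by ext; simp
    rw [hB_eq]
    exact .biUnion B.to_countable fun c _ =>
      MeasurableSpace.measurableSet_generateFrom ⟨univ, .univ, c, rfl⟩
  · rintro _ ⟨A, hA, c, rfl⟩
    exact (le_sup_left (a := m) _ hA).inter
      (le_sup_right (b := MeasurableSpace.comap G mΓ) _ ⟨{c}, measurableSet_singleton c, rfl⟩)

theorem condExp_sup_comap_ae_eq_of_setIntegral_inter_preimage_eq [mΓ : MeasurableSpace Γ]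
    [Countable Γ] [MeasurableSingletonClass Γ] {μ : Measure Ω} [IsFiniteMeasure μ]
    (hm : m ≤ mΩ) {G : Ω → Γ} (hG : Measurable G) {f g : Ω → ℝ} (hf : Integrable f μ)
    (hg : Integrable g μ) (hgm : StronglyMeasurable[m ⊔ MeasurableSpace.comap G mΓ] g)
    (h : ∀ A, MeasurableSet[m] A → ∀ c,
      ∫ x in A ∩ G ⁻¹' {c}, f x ∂μ = ∫ x in A ∩ G ⁻¹' {c}, g x ∂μ) :
    μ[f | m ⊔ MeasurableSpace.comap G mΓ] =ᵐ[μ] g := by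
  have hle : m ⊔ MeasurableSpace.comap G mΓ ≤ mΩ := sup_le hm hG.comap_le
  have h_univ : ∫ x, f x ∂μ = ∫ x, g x ∂μ := by
    have hU : (⋃ c, univ ∩ G ⁻¹' {c}) = univ := by ext; simp
    have hfib : ∀ c, MeasurableSet (univ ∩ G ⁻¹' {c}) :=
      fun c => MeasurableSet.univ.inter (hG (measurableSet_singleton c))
    have hdisj : Pairwise (Function.onFun Disjoint fun c => univ ∩ G ⁻¹' {c}) := by
      simpa only [univ_inter] using pairwise_disjoint_fiber G
    rw [← setIntegral_univ, ← setIntegral_univ (f := g), ← hU,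
      integral_iUnion hfib hdisj hf.integrableOn, integral_iUnion hfib hdisj hg.integrableOn]
    exact tsum_congr fun c => h univ .univ c
  refine (ae_eq_condExp_of_forall_setIntegral_eq hle hf (fun _ _ _ => hg.integrableOn)
    (fun t ht _ => ?_) hgm.aestronglyMeasurable).symm
  refine (setIntegral_eq_setIntegral_of_isPiSystem hle
    sup_comap_eq_generateFrom_inter_preimage_singleton isPiSystem_inter_preimage_singleton
    hf hg ?_ h_univ ht).symm
  rintro _ ⟨A, hA, c, rfl⟩
  exact h A hA c

variable {μ ν : Measure Ω}

theorem integral_mul_condExp_eq [IsFiniteMeasure μ] (hm : m ≤ mΩ) {φ g : Ω → ℝ}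
    (hφ : StronglyMeasurable[m] φ) (hφg : Integrable (φ * g) μ) (hg : Integrable g μ) :
    ∫ x, φ x * g x ∂μ = ∫ x, φ x * (μ[g | m]) x ∂μ := by
  rw [← integral_condExp hm]
  exact integral_congr_ae (condExp_mul_of_stronglyMeasurable_left hφ hφg hg)

theorem setIntegral_inter_div_condExp_indicator [Finite Ω] [IsFiniteMeasure μ] (hm : m ≤ mΩ)
    {B : Set Ω} (hB : MeasurableSet B)
    (hpos : ∀ᵐ x ∂μ, 0 < (μ[B.indicator (fun _ => (1 : ℝ)) | m]) x)
    {f : Ω → ℝ} (hf : StronglyMeasurable[m] f) {A : Set Ω} (hA : MeasurableSet[m] A) :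
    ∫ x in A ∩ B, f x / (μ[B.indicator (fun _ => (1 : ℝ)) | m]) x ∂μ = ∫ x in A, f x ∂μ := by
  set E := μ[B.indicator (fun _ => (1 : ℝ)) | m]
  have hφ : StronglyMeasurable[m] (A.indicator fun x => f x / E x) :=
    (hf.measurable.div stronglyMeasurable_condExp.measurable).stronglyMeasurable.indicator hA
  calc ∫ x in A ∩ B, f x / E x ∂μ
      = ∫ x, A.indicator (fun x => f x / E x) x * B.indicator (fun _ => (1 : ℝ)) x ∂μ := by
        rw [← integral_indicator ((hm _ hA).inter hB)]
        refine integral_congr_ae (ae_of_all _ fun x => ?_)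
        by_cases hxA : x ∈ A <;> by_cases hxB : x ∈ B <;> simp [hxA, hxB]
    _ = ∫ x, A.indicator (fun x => f x / E x) x * E x ∂μ :=
        integral_mul_condExp_eq hm hφ
          ((hφ.mono hm).mul (stronglyMeasurable_const.indicator hB)).integrable_of_finite
          (stronglyMeasurable_const.indicator hB).integrable_of_finite
    _ = ∫ x in A, f x ∂μ := by
        rw [← integral_indicator (hm _ hA)]
        refine integral_congr_ae (hpos.mono fun x hx => ?_)
        by_cases hxA : x ∈ A <;> simp [hxA, hx.ne']

variable {L : Ω → ℝ}

theorem ae_pos_of_forall_setIntegral_eq_measureReal [IsFiniteMeasure ν] (hm : m ≤ mΩ)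
    (hL : StronglyMeasurable[m] L) (hLν : ∀ A, MeasurableSet[m] A → ∫ x in A, L x ∂μ = ν.real A)
    (hμν : μ ≪ ν) : ∀ᵐ x ∂μ, 0 < L x := by
  have hA : MeasurableSet[m] {x | L x ≤ 0} := hL.measurable measurableSet_Iic
  have hνA : ν.real {x | L x ≤ 0} ≤ 0 :=
    hLν _ hA ▸ setIntegral_nonpos (hm _ hA) fun _ hx => hx
  have hμA : μ {x | L x ≤ 0} = 0 :=
    hμν ((measureReal_eq_zero_iff).mp (le_antisymm hνA measureReal_nonneg))
  filter_upwards [measure_eq_zero_iff_ae_notMem.mp hμA] with x hx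
  simpa using hx

theorem setIntegral_mul_eq_setIntegral_of_forall_setIntegral_eq_measureReal [Finite Ω]
    [IsFiniteMeasure μ] [IsFiniteMeasure ν] (hm : m ≤ mΩ) (hL : StronglyMeasurable[m] L)
    (hLν : ∀ A, MeasurableSet[m] A → ∫ x in A, L x ∂μ = ν.real A) {f : Ω → ℝ}
    (hf : StronglyMeasurable[m] f) {A : Set Ω} (hA : MeasurableSet[m] A) :
    ∫ x in A, f x * L x ∂μ = ∫ x in A, f x ∂ν := by
  classical
  set R := (Set.finite_range f).toFinset
  have hfib : ∀ r, MeasurableSet[m] (A ∩ f ⁻¹' {r}) :=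
    fun r => hA.inter (hf.measurable (measurableSet_singleton r))
  have hA_eq : A = ⋃ r ∈ R, A ∩ f ⁻¹' {r} := by ext; simp [R]
  have hdisj : Set.Pairwise R (Function.onFun Disjoint fun r => A ∩ f ⁻¹' {r}) :=
    fun r _ r' _ hr => (pairwise_disjoint_fiber f hr).mono inter_subset_right inter_subset_right
  have hfL : Integrable (fun x => f x * L x) μ :=
    ((hf.mono hm).mul (hL.mono hm)).integrable_of_finite
  rw [hA_eq, integral_biUnion_finset R (fun r _ => hm _ (hfib r)) hdisj
      fun r _ => hfL.integrableOn,
    integral_biUnion_finset R (fun r _ => hm _ (hfib r)) hdisj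
      fun r _ => (hf.mono hm).integrable_of_finite.integrableOn]
  refine Finset.sum_congr rfl fun r _ => ?_
  have hf_eq : EqOn f (fun _ => r) (A ∩ f ⁻¹' {r}) := fun x hx => hx.2
  calc ∫ x in A ∩ f ⁻¹' {r}, f x * L x ∂μ = ∫ x in A ∩ f ⁻¹' {r}, r * L x ∂μ :=
        setIntegral_congr_fun (hm _ (hfib r)) fun x hx => by rw [hf_eq hx]
    _ = ∫ x in A ∩ f ⁻¹' {r}, r ∂ν := by
        rw [integral_const_mul, hLν _ (hfib r), setIntegral_const, smul_eq_mul, mul_comm]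
    _ = ∫ x in A ∩ f ⁻¹' {r}, f x ∂ν := (setIntegral_congr_fun (hm _ (hfib r)) hf_eq).symm

theorem setIntegral_inter_mul_density_div_eq [Finite Ω] [IsFiniteMeasure μ] [IsFiniteMeasure ν]
    (hm : m ≤ mΩ) (hL : StronglyMeasurable[m] L)
    (hLν : ∀ A, MeasurableSet[m] A → ∫ x in A, L x ∂μ = ν.real A)
    {B : Set Ω} (hB : MeasurableSet B)
    (hpos : ∀ᵐ x ∂μ, 0 < (μ[B.indicator (fun _ => (1 : ℝ)) | m]) x) {q : Ω → ℝ}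
    (hq : ∀ x ∈ B, q x = (μ[B.indicator (fun _ => (1 : ℝ)) | m]) x / μ.real B)
    {f : Ω → ℝ} (hf : StronglyMeasurable[m] f) {A : Set Ω} (hA : MeasurableSet[m] A) :
    ∫ x in A ∩ B, f x * (L x / q x) ∂μ = μ.real B * ∫ x in A, f x ∂ν := by
  set E := μ[B.indicator (fun _ => (1 : ℝ)) | m]
  calc ∫ x in A ∩ B, f x * (L x / q x) ∂μ
      = ∫ x in A ∩ B, μ.real B * (f x * L x / E x) ∂μ :=
        setIntegral_congr_fun ((hm _ hA).inter hB) fun x hx => by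
          rw [hq x hx.2, div_div_eq_mul_div]; ring
    _ = μ.real B * ∫ x in A, f x * L x ∂μ := by
        rw [integral_const_mul, setIntegral_inter_div_condExp_indicator hm hB hpos
          (f := fun x => f x * L x) (hf.mul hL) hA]
    _ = μ.real B * ∫ x in A, f x ∂ν := by
        rw [setIntegral_mul_eq_setIntegral_of_forall_setIntegral_eq_measureReal hm hL hLν hf hA]

variable {G : Ω → Γ}

/-- The paper's `q^G_t` is `condDensity μ (ℱ t) G`. -/
noncomputable def condDensity (μ : Measure Ω) (m : MeasurableSpace Ω) (G : Ω → Γ) (ω : Ω) : ℝ :=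
  (μ[(G ⁻¹' {G ω}).indicator (fun _ => (1 : ℝ)) | m]) ω / μ.real (G ⁻¹' {G ω})

theorem measurable_condDensity [mΓ : MeasurableSpace Γ] [Countable Γ]
    [MeasurableSingletonClass Γ] :
    Measurable[m ⊔ MeasurableSpace.comap G mΓ] (condDensity μ m G) :=
  measurable_sup_comap_apply (F := fun c ω =>
      (μ[(G ⁻¹' {c}).indicator (fun _ => (1 : ℝ)) | m]) ω / μ.real (G ⁻¹' {c}))
    fun _ => stronglyMeasurable_condExp.measurable.div_const _

theorem condDensity_ae_pos [Countable Γ] (hμG : ∀ c, 0 < μ.real (G ⁻¹' {c}))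
    (hpos : ∀ c, ∀ᵐ ω ∂μ, 0 < (μ[(G ⁻¹' {c}).indicator (fun _ => (1 : ℝ)) | m]) ω) :
    ∀ᵐ ω ∂μ, 0 < condDensity μ m G ω := by
  filter_upwards [ae_all_iff.2 hpos] with ω hω
  exact div_pos (hω (G ω)) (hμG (G ω))

theorem condExp_mul_density_div_condDensity_ae_eq [Finite Ω] [mΓ : MeasurableSpace Γ]
    [Countable Γ] [MeasurableSingletonClass Γ] [IsFiniteMeasure μ] [IsFiniteMeasure ν]
    {ℱ : Filtration ℕ mΩ}
    (hG : Measurable G) {L f : ℕ → Ω → ℝ} (hL : ∀ u, StronglyMeasurable[ℱ u] (L u))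
    (hLν : ∀ u A, MeasurableSet[ℱ u] A → ∫ x in A, L u x ∂μ = ν.real A) {s t : ℕ} (hst : s ≤ t)
    (hpos : ∀ c, ∀ u ≤ t, ∀ᵐ ω ∂μ, 0 < (μ[(G ⁻¹' {c}).indicator (fun _ => (1 : ℝ)) | ℱ u]) ω)
    (hf_t : StronglyMeasurable[ℱ t] (f t)) (hf_s : StronglyMeasurable[ℱ s] (f s))
    (hf : ∀ A, MeasurableSet[ℱ s] A → ∫ x in A, f t x ∂ν = ∫ x in A, f s x ∂ν) :
    μ[fun ω => f t ω * (L t ω / condDensity μ (ℱ t) G ω) | ℱ s ⊔ MeasurableSpace.comap G mΓ]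
      =ᵐ[μ] fun ω => f s ω * (L s ω / condDensity μ (ℱ s) G ω) := by
  have hkey : ∀ u ≤ t, StronglyMeasurable[ℱ u] (f u) → ∀ A, MeasurableSet[ℱ u] A → ∀ c,
      ∫ ω in A ∩ G ⁻¹' {c}, f u ω * (L u ω / condDensity μ (ℱ u) G ω) ∂μ =
        μ.real (G ⁻¹' {c}) * ∫ ω in A, f u ω ∂ν := fun u hu hfu A hA c =>
    setIntegral_inter_mul_density_div_eq (ℱ.le u) (hL u) (hLν u)
      (hG (measurableSet_singleton c)) (hpos c u hu) (fun ω hω => by rw [condDensity, hω]) hfu hA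
  have hfM_meas : ∀ u, StronglyMeasurable[ℱ u] (f u) →
      StronglyMeasurable[ℱ u ⊔ MeasurableSpace.comap G mΓ]
        fun ω => f u ω * (L u ω / condDensity μ (ℱ u) G ω) := fun u hfu =>
    have hle : (ℱ u : MeasurableSpace Ω) ≤ ℱ u ⊔ MeasurableSpace.comap G mΓ := le_sup_left
    ((hfu.mono hle).measurable.mul
      (((hL u).mono hle).measurable.div measurable_condDensity)).stronglyMeasurable
  have hfM_int : ∀ u, StronglyMeasurable[ℱ u] (f u) →
      Integrable (fun ω => f u ω * (L u ω / condDensity μ (ℱ u) G ω)) μ := fun u hfu =>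
    ((hfM_meas u hfu).mono (sup_le (ℱ.le u) hG.comap_le)).integrable_of_finite
  refine condExp_sup_comap_ae_eq_of_setIntegral_inter_preimage_eq (ℱ.le s) hG
    (hfM_int t hf_t) (hfM_int s hf_s) (hfM_meas s hf_s) fun A hA c => ?_
  rw [hkey t le_rfl hf_t A (ℱ.mono hst A hA) c, hkey s hst hf_s A hA c, hf A hA]

end

theorem stmt5_general {Ω : Type*} [Fintype Ω] {mΩ : MeasurableSpace Ω}
    (μ : Measure Ω) [IsProbabilityMeasure μ]
    (T : ℕ) (ℱ 𝒢 : Filtration ℕ mΩ)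
    {Γ : Type*} [Fintype Γ] [MeasurableSpace Γ] [MeasurableSingletonClass Γ]
    (G : Ω → Γ) (hG : Measurable G)
    (h𝒢 : ∀ s, (𝒢 s : MeasurableSpace Ω) =
      (ℱ s : MeasurableSpace Ω) ⊔ MeasurableSpace.comap G inferInstance)
    (hposG : ∀ c : Γ, 0 < (μ (G ⁻¹' {c})).toReal)
    (hpos : ∀ c : Γ, ∀ s ≤ T - 1, ∀ᵐ ω ∂μ,
      0 < (μ[(G ⁻¹' {c}).indicator (fun _ => (1 : ℝ)) | ℱ s]) ω)
    (qG : ℕ → Ω → ℝ)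
    (hqG : ∀ s ω, qG s ω =
      (μ[(G ⁻¹' {G ω}).indicator (fun _ => (1 : ℝ)) | ℱ s]) ω / (μ (G ⁻¹' {G ω})).toReal)
    (Phat : Measure Ω) [IsProbabilityMeasure Phat]
    (hequiv : Phat ≪ μ ∧ μ ≪ Phat)
    (L : ℕ → Ω → ℝ)
    (hL : ∀ s, StronglyMeasurable[ℱ s] (L s) ∧
      ∀ A, MeasurableSet[ℱ s] A → ∫ ω in A, L s ω ∂μ = (Phat A).toReal)
    (Stil : ℕ → Ω → ℝ)
    (hSadapted : ∀ s ≤ T - 1, StronglyMeasurable[ℱ s] (Stil s))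
    (hSmart : ∀ s t, s ≤ t → t ≤ T - 1 → Phat[Stil t | ℱ s] =ᵐ[Phat] Stil s) :
    (∀ s ≤ T - 1, ∀ᵐ ω ∂μ, 0 < L s ω / qG s ω) ∧
    (∀ s ≤ T - 1, StronglyMeasurable[𝒢 s] (fun ω => L s ω / qG s ω)) ∧
    (∀ s t, s ≤ t → t ≤ T - 1 →
      μ[(fun ω => L t ω / qG t ω) | 𝒢 s] =ᵐ[μ] fun ω => L s ω / qG s ω) ∧
    (∀ s t, s ≤ t → t ≤ T - 1 →
      μ[(fun ω => Stil t ω * (L t ω / qG t ω)) | 𝒢 s] =ᵐ[μ]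
        fun ω => Stil s ω * (L s ω / qG s ω)) := by
  obtain rfl : qG = fun s => condDensity μ (ℱ s) G := funext₂ hqG
  have hℱ𝒢 : ∀ u, (ℱ u : MeasurableSpace Ω) ≤ 𝒢 u := fun u => h𝒢 u ▸ le_sup_left
  refine ⟨fun s hs => ?_, fun s _ => ?_, fun s t hst ht => ?_, fun s t hst ht => ?_⟩
  · filter_upwards [ae_pos_of_forall_setIntegral_eq_measureReal (ℱ.le s) (hL s).1 (hL s).2
      hequiv.2, condDensity_ae_pos hposG fun c => hpos c s hs] with ω hLω hqω
    exact div_pos hLω hqω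
  · exact (((hL s).1.mono (hℱ𝒢 s)).measurable.div
      (h𝒢 s ▸ measurable_condDensity)).stronglyMeasurable
  · rw [h𝒢 s]
    simpa only [one_mul] using condExp_mul_density_div_condDensity_ae_eq (f := fun _ _ => 1) hG
      (fun u => (hL u).1) (fun u => (hL u).2) hst (fun c u hu => hpos c u (hu.trans ht))
      stronglyMeasurable_const stronglyMeasurable_const fun _ _ => rfl
  · rw [h𝒢 s]
    refine condExp_mul_density_div_condDensity_ae_eq hG (fun u => (hL u).1) (fun u => (hL u).2)
      hst (fun c u hu => hpos c u (hu.trans ht)) (hSadapted t ht) (hSadapted s (hst.trans ht))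
      fun A hA => ?_
    rw [← setIntegral_condExp (ℱ.le s) ((hSadapted t ht).mono (ℱ.le t)).integrable_of_finite hA]
    exact setIntegral_congr_ae (ℱ.le s A hA) ((hSmart s t hst ht).mono fun _ h _ => h)

/-- `L̂ / q^G` is a deflator on `{0,...,T-1}`: it is a positive `(P, 𝒢)`-martingale `M`
such that `S̃ · M` is a `(P, 𝒢)`-martingale, whenever `S̃` is an `ℱ`-martingale under
an equivalent measure `P̂` with density process `L̂`. -/
theorem stmt5 {Ω : Type*} [Fintype Ω] {mΩ : MeasurableSpace Ω}
    (μ : Measure Ω) [IsProbabilityMeasure μ]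
    (T : ℕ) (hT : 1 ≤ T) (ℱ 𝒢 : Filtration ℕ mΩ)
    {Γ : Type*} [Fintype Γ] [MeasurableSpace Γ] [MeasurableSingletonClass Γ]
    (G : Ω → Γ) (hG : Measurable G)
    (h𝒢 : ∀ s, (𝒢 s : MeasurableSpace Ω) =
      (ℱ s : MeasurableSpace Ω) ⊔ MeasurableSpace.comap G inferInstance)
    (hposG : ∀ c : Γ, 0 < (μ (G ⁻¹' {c})).toReal)
    (hpos : ∀ c : Γ, ∀ s ≤ T - 1, ∀ᵐ ω ∂μ,
      0 < (μ[(G ⁻¹' {c}).indicator (fun _ => (1 : ℝ)) | ℱ s]) ω)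
    (qG : ℕ → Ω → ℝ)
    (hqG : ∀ s ω, qG s ω =
      (μ[(G ⁻¹' {G ω}).indicator (fun _ => (1 : ℝ)) | ℱ s]) ω / (μ (G ⁻¹' {G ω})).toReal)
    (Phat : Measure Ω) [IsProbabilityMeasure Phat]
    (hequiv : Phat ≪ μ ∧ μ ≪ Phat)
    (L : ℕ → Ω → ℝ)
    (hL : ∀ s, StronglyMeasurable[ℱ s] (L s) ∧
      ∀ A, MeasurableSet[ℱ s] A → ∫ ω in A, L s ω ∂μ = (Phat A).toReal)
    (Stil : ℕ → Ω → ℝ)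
    (hSadapted : ∀ s ≤ T - 1, StronglyMeasurable[ℱ s] (Stil s))
    (hSmart : ∀ s t, s ≤ t → t ≤ T - 1 → Phat[Stil t | ℱ s] =ᵐ[Phat] Stil s) :
    (∀ s ≤ T - 1, ∀ᵐ ω ∂μ, 0 < L s ω / qG s ω) ∧
    (∀ s ≤ T - 1, StronglyMeasurable[𝒢 s] (fun ω => L s ω / qG s ω)) ∧
    (∀ s t, s ≤ t → t ≤ T - 1 →
      μ[(fun ω => L t ω / qG t ω) | 𝒢 s] =ᵐ[μ] fun ω => L s ω / qG s ω) ∧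
    (∀ s t, s ≤ t → t ≤ T - 1 →
      μ[(fun ω => Stil t ω * (L t ω / qG t ω)) | 𝒢 s] =ᵐ[μ]
        fun ω => Stil s ω * (L s ω / qG s ω)) :=
  stmt5_general μ T ℱ 𝒢 G hG h𝒢 hposG hpos qG hqG Phat hequiv L hL Stil hSadapted hSmart
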